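/- arXiv:2105.09716 — 3 statements merged into one kernel-verified Lean document; each statement's English description precedes it below -/
import Mathlib

section
/- Suppose (V*, h*) minimizes the weighted augmented Lagrangian L_μ(V,h,x') = Σ_s ρ₀(s) V(s) + (1/(2μ)) Σ_{s,a} w(s,a) [Z_μ(V,h,x',s,a)]² over all V and all h ≥ 0. Then x(s,a) := Z_μ(V*,h*,x',s,a) is an optimal solution of the weighted proximal dual problem: maximize over x ≥ 0 satisfying Σ_{s,a}(δ_{s'}(s) − γ P(s'|s,a)) w(s,a) x(s,a) = ρ₀(s') for all s', the objective Σ_{s,a} r(s,a) w(s,a) x(s,a) − (1/(2μ)) Σ_{s,a} w(s,a)(x(s,a) − x'(s,a))². -/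
/-!
The Lagrangian `L_μ` is a quadratic polynomial in `(V, h)` whose gradient at `(V, h)` is
`(ρ₀ - E Z, w Z)`, where `Z = Z_μ(V, h, x')` and `E = bellmanFlow P γ w` is the flow operator
`E x (s') = Σ_{s,a} (δ_{s'}(s) - γ P(s'|s,a)) w(s,a) x(s,a)` of the dual constraints.
First-order optimality of `(V*, h*)` over `h ≥ 0`, tested in the directions "raise `h` at one
pair", "move `V` freely" and "shrink `h*` to `0`", gives the KKT conditions `Z ≥ 0`, `E Z = ρ₀`
and `Σ w Z h* ≤ 0`. Since `r = (Z - x')/μ - h* - γ P V* + V*`, completing the square gives,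
for every `x`,
`obj Z - obj x = ⟨V*, E Z - E x⟩ + Σ w h* (x - Z) + (1/2μ) Σ w (x - Z)²`,
which is nonnegative when `x ≥ 0` and `E x = ρ₀`.
-/

/-- The Z-function `Z_μ(V,h,x',s,a)`. -/
def Zmu {S A : Type*} [Fintype S]
    (P : S → A → S → ℝ) (r : S → A → ℝ) (γ μ : ℝ)
    (V : S → ℝ) (h x' : S → A → ℝ) (s : S) (a : A) : ℝ :=
  x' s a + μ * (h s a + r s a + γ * (∑ s', P s a s' * V s') - V s)

/-- The weighted augmented Lagrangian `L_μ(V,h,x')`. -/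
noncomputable def Lmu {S A : Type*} [Fintype S] [Fintype A]
    (P : S → A → S → ℝ) (r : S → A → ℝ) (ρ₀ : S → ℝ) (γ μ : ℝ)
    (w : S → A → ℝ) (V : S → ℝ) (h x' : S → A → ℝ) : ℝ :=
  (∑ s, ρ₀ s * V s) +
    (1 / (2 * μ)) * ∑ s, ∑ a, w s a * (Zmu P r γ μ V h x' s a) ^ 2

open Finset Filter Topology

lemma nonneg_of_forall_mul_add_sq_mul_nonneg {b c : ℝ}
    (h : ∀ t : ℝ, 0 < t → t ≤ 1 → 0 ≤ t * b + t ^ 2 * c) : 0 ≤ b := by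
  have hlim : Tendsto (fun t : ℝ => b + t * c) (𝓝[>] 0) (𝓝 b) :=
    tendsto_nhdsWithin_of_tendsto_nhds (Continuous.tendsto' (by fun_prop) 0 b (by simp))
  refine ge_of_tendsto hlim ?_
  filter_upwards [Ioo_mem_nhdsGT one_pos] with t ht
  have := h t ht.1 ht.2.le
  nlinarith [ht.1]

section

variable {S A : Type*} [Fintype S] [Fintype A] [DecidableEq S]

def bellmanFlow (P : S → A → S → ℝ) (γ : ℝ) (w x : S → A → ℝ) (s' : S) : ℝ :=
  ∑ s, ∑ a, ((if s = s' then (1 : ℝ) else 0) - γ * P s a s') * w s a * x s a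

lemma sum_mul_bellmanFlow (P : S → A → S → ℝ) (γ : ℝ) (w x : S → A → ℝ) (V : S → ℝ) :
    ∑ s', V s' * bellmanFlow P γ w x s' =
      ∑ s, ∑ a, w s a * x s a * (V s - γ * ∑ s', P s a s' * V s') := by
  simp only [bellmanFlow, mul_sum]
  rw [sum_comm]
  refine sum_congr rfl fun s _ => ?_
  rw [sum_comm]
  refine sum_congr rfl fun a _ => ?_
  simp only [sub_mul, ite_mul, one_mul, zero_mul, mul_sub, mul_ite, mul_zero, sum_sub_distrib,
    sum_ite_eq, mem_univ, ↓reduceIte, mul_sum]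
  congr 1
  · ring
  · exact sum_congr rfl fun s' _ => by ring

lemma exists_Lmu_add_mul_eq (P : S → A → S → ℝ) (r : S → A → ℝ) (ρ₀ : S → ℝ) (γ : ℝ) {μ : ℝ}
    (hμ : μ ≠ 0) (w : S → A → ℝ) (V ΔV : S → ℝ) (h Δh x' : S → A → ℝ) :
    ∃ q : ℝ, ∀ t : ℝ,
      Lmu P r ρ₀ γ μ w (fun s => V s + t * ΔV s) (fun s a => h s a + t * Δh s a) x' =
        Lmu P r ρ₀ γ μ w V h x' +
          t * (∑ s, ΔV s * (ρ₀ s - bellmanFlow P γ w (Zmu P r γ μ V h x') s) +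
            ∑ s, ∑ a, w s a * Zmu P r γ μ V h x' s a * Δh s a) + t ^ 2 * q := by
  set Z := Zmu P r γ μ V h x'
  set D : S → A → ℝ := fun s a => Δh s a + γ * ∑ s', P s a s' * ΔV s' - ΔV s
  have hZ : ∀ t s a, Zmu P r γ μ (fun s => V s + t * ΔV s) (fun s a => h s a + t * Δh s a) x' s a
      = Z s a + t * μ * D s a := by
    intro t s a
    have hP : ∑ s', P s a s' * (V s' + t * ΔV s') =
        ∑ s', P s a s' * V s' + t * ∑ s', P s a s' * ΔV s' := by
      simp only [mul_add, sum_add_distrib, mul_sum, mul_left_comm]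
    simp only [Z, D, Zmu, hP]
    ring
  have hgrad : ∑ s, ΔV s * (ρ₀ s - bellmanFlow P γ w Z s) + ∑ s, ∑ a, w s a * Z s a * Δh s a
      = ∑ s, ρ₀ s * ΔV s + ∑ s, ∑ a, w s a * Z s a * D s a := by
    calc _ = ∑ s, ρ₀ s * ΔV s - ∑ s', ΔV s' * bellmanFlow P γ w Z s' +
          ∑ s, ∑ a, w s a * Z s a * Δh s a := by
          simp only [mul_sub, sum_sub_distrib, mul_comm]
      _ = _ := by
          rw [sum_mul_bellmanFlow, sub_add_eq_add_sub, add_sub_assoc, ← sum_sub_distrib]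
          simp only [D, ← sum_sub_distrib]
          congr 1
          exact sum_congr rfl fun s _ => sum_congr rfl fun a _ => by ring
  refine ⟨μ / 2 * ∑ s, ∑ a, w s a * D s a ^ 2, fun t => ?_⟩
  rw [hgrad]
  have hsq : ∀ s a, w s a * (Z s a + t * μ * D s a) ^ 2 =
      w s a * Z s a ^ 2 + 2 * t * μ * (w s a * Z s a * D s a) +
        t ^ 2 * μ ^ 2 * (w s a * D s a ^ 2) :=
    fun s a => by ring
  have hlin : ∀ s, ρ₀ s * (V s + t * ΔV s) = ρ₀ s * V s + t * (ρ₀ s * ΔV s) := fun s => by ring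
  simp only [Lmu, hZ, hsq, hlin, sum_add_distrib, ← mul_sum]
  field_simp
  ring

section Minimizer

variable (P : S → A → S → ℝ) (r : S → A → ℝ) (ρ₀ : S → ℝ) {γ μ : ℝ} (hμ : μ ≠ 0)
  (w : S → A → ℝ) (x' : S → A → ℝ) {V : S → ℝ} {h : S → A → ℝ} (hh : ∀ s a, 0 ≤ h s a)
  (hmin : ∀ (V' : S → ℝ) (h' : S → A → ℝ), (∀ s a, 0 ≤ h' s a) →
    Lmu P r ρ₀ γ μ w V h x' ≤ Lmu P r ρ₀ γ μ w V' h' x')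
include hμ hmin

lemma gradient_nonneg_of_minimizer (ΔV : S → ℝ) (Δh : S → A → ℝ)
    (hΔh : ∀ t : ℝ, 0 < t → t ≤ 1 → ∀ s a, 0 ≤ h s a + t * Δh s a) :
    0 ≤ ∑ s, ΔV s * (ρ₀ s - bellmanFlow P γ w (Zmu P r γ μ V h x') s) +
      ∑ s, ∑ a, w s a * Zmu P r γ μ V h x' s a * Δh s a := by
  obtain ⟨q, hq⟩ := exists_Lmu_add_mul_eq P r ρ₀ γ hμ w V ΔV h Δh x'
  refine nonneg_of_forall_mul_add_sq_mul_nonneg (c := q) fun t ht0 ht1 => ?_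
  have hle := hmin (fun s => V s + t * ΔV s) (fun s a => h s a + t * Δh s a) (hΔh t ht0 ht1)
  rw [hq] at hle
  linarith

include hh

lemma Zmu_nonneg_of_minimizer {s₀ : S} {a₀ : A} (hw : 0 < w s₀ a₀) :
    0 ≤ Zmu P r γ μ V h x' s₀ a₀ := by
  classical
  have hΔh : ∀ t : ℝ, 0 < t → t ≤ 1 → ∀ s a,
      0 ≤ h s a + t * (if s = s₀ ∧ a = a₀ then 1 else 0) := fun t ht _ s a => by
    have := hh s a
    split_ifs <;> nlinarith
  have := gradient_nonneg_of_minimizer P r ρ₀ hμ w x' hmin 0 _ hΔh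
  simp only [Pi.zero_apply, zero_mul, sum_const_zero, ite_and, mul_ite, mul_one, mul_zero,
    sum_ite_irrel, sum_ite_eq', mem_univ, ↓reduceIte, zero_add] at this
  exact nonneg_of_mul_nonneg_right this hw

lemma bellmanFlow_Zmu_of_minimizer (s₀ : S) :
    bellmanFlow P γ w (Zmu P r γ μ V h x') s₀ = ρ₀ s₀ := by
  have key : ∀ ε : ℝ, 0 ≤ ε * (ρ₀ s₀ - bellmanFlow P γ w (Zmu P r γ μ V h x') s₀) := by
    intro ε
    have := gradient_nonneg_of_minimizer P r ρ₀ hμ w x' hmin (fun s => if s = s₀ then ε else 0) 0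
      (fun _ _ _ s a => by simpa using hh s a)
    simpa [ite_mul] using this
  linarith [key 1, key (-1)]

lemma sum_mul_Zmu_mul_nonpos_of_minimizer :
    ∑ s, ∑ a, w s a * Zmu P r γ μ V h x' s a * h s a ≤ 0 := by
  have hΔh : ∀ t : ℝ, 0 < t → t ≤ 1 → ∀ s a, 0 ≤ h s a + t * -h s a := fun t _ ht s a => by
    nlinarith [hh s a]
  have := gradient_nonneg_of_minimizer P r ρ₀ hμ w x' hmin 0 _ hΔh
  simpa using this

end Minimizer

noncomputable def proxObjective (r w : S → A → ℝ) (μ : ℝ) (x' x : S → A → ℝ) : ℝ :=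
  (∑ s, ∑ a, r s a * w s a * x s a) - (1 / (2 * μ)) * ∑ s, ∑ a, w s a * (x s a - x' s a) ^ 2

lemma proxObjective_Zmu_sub (P : S → A → S → ℝ) (r : S → A → ℝ) (γ : ℝ) {μ : ℝ} (hμ : μ ≠ 0)
    (w : S → A → ℝ) (V : S → ℝ) (h x' x : S → A → ℝ) :
    proxObjective r w μ x' (Zmu P r γ μ V h x') - proxObjective r w μ x' x =
      (∑ s', V s' * bellmanFlow P γ w (Zmu P r γ μ V h x') s' -
        ∑ s', V s' * bellmanFlow P γ w x s') +
      ∑ s, ∑ a, w s a * h s a * (x s a - Zmu P r γ μ V h x' s a) +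
      1 / (2 * μ) * ∑ s, ∑ a, w s a * (x s a - Zmu P r γ μ V h x' s a) ^ 2 := by
  simp only [sum_mul_bellmanFlow, proxObjective, mul_sum, ← sum_sub_distrib, ← sum_add_distrib]
  refine sum_congr rfl fun s _ => sum_congr rfl fun a _ => ?_
  simp only [Zmu, ← mul_sum]
  field_simp
  ring

lemma proxObjective_le_of_kkt (P : S → A → S → ℝ) (r : S → A → ℝ) (γ : ℝ) {μ : ℝ} (hμ : 0 < μ)
    {w : S → A → ℝ} (hw : ∀ s a, 0 ≤ w s a) {V : S → ℝ} {h : S → A → ℝ} (hh : ∀ s a, 0 ≤ h s a)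
    (x' : S → A → ℝ) (hcompl : ∑ s, ∑ a, w s a * Zmu P r γ μ V h x' s a * h s a ≤ 0)
    {x : S → A → ℝ} (hx : ∀ s a, 0 ≤ x s a)
    (hflow : ∀ s', bellmanFlow P γ w x s' = bellmanFlow P γ w (Zmu P r γ μ V h x') s') :
    proxObjective r w μ x' x ≤ proxObjective r w μ x' (Zmu P r γ μ V h x') := by
  rw [← sub_nonneg, proxObjective_Zmu_sub P r γ hμ.ne']
  simp only [hflow, sub_self, zero_add]
  have hslack : 0 ≤ ∑ s, ∑ a, w s a * h s a * (x s a - Zmu P r γ μ V h x' s a) := by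
    have hx_term : 0 ≤ ∑ s, ∑ a, w s a * h s a * x s a :=
      sum_nonneg fun s _ => sum_nonneg fun a _ => mul_nonneg (mul_nonneg (hw s a) (hh s a)) (hx s a)
    have hcomm : ∑ s, ∑ a, w s a * h s a * Zmu P r γ μ V h x' s a =
        ∑ s, ∑ a, w s a * Zmu P r γ μ V h x' s a * h s a :=
      sum_congr rfl fun s _ => sum_congr rfl fun a _ => mul_right_comm _ _ _
    simp only [mul_sub, sum_sub_distrib]
    linarith
  have hdist : 0 ≤ ∑ s, ∑ a, w s a * (x s a - Zmu P r γ μ V h x' s a) ^ 2 :=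
    sum_nonneg fun s _ => sum_nonneg fun a _ => mul_nonneg (hw s a) (sq_nonneg _)
  have hcoef : (0 : ℝ) ≤ 1 / (2 * μ) := by positivity
  nlinarith

end

theorem Z_of_alm_minimizer_solves_prox_dual_general
    {S A : Type*} [Fintype S] [Fintype A] [DecidableEq S]
    (P : S → A → S → ℝ)
    (r : S → A → ℝ)
    (ρ₀ : S → ℝ)
    (γ : ℝ)
    (w : S → A → ℝ) (hw : ∀ s a, 0 < w s a)
    (μ : ℝ) (hμ : 0 < μ)
    (x' : S → A → ℝ)
    (Vstar : S → ℝ) (hstar : S → A → ℝ)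
    (hstar_nonneg : ∀ s a, 0 ≤ hstar s a)
    (hmin : ∀ (V : S → ℝ) (h : S → A → ℝ), (∀ s a, 0 ≤ h s a) →
      Lmu P r ρ₀ γ μ w Vstar hstar x' ≤ Lmu P r ρ₀ γ μ w V h x') :
    -- feasibility of x := Z_μ(V*,h*,x',·)
    ((∀ s a, 0 ≤ Zmu P r γ μ Vstar hstar x' s a) ∧
      (∀ s' : S, ∑ s, ∑ a,
          ((if s = s' then (1 : ℝ) else 0) - γ * P s a s') * w s a *
            Zmu P r γ μ Vstar hstar x' s a = ρ₀ s'))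
    ∧
    -- optimality among all feasible x
    (∀ x : S → A → ℝ, (∀ s a, 0 ≤ x s a) →
      (∀ s' : S, ∑ s, ∑ a,
          ((if s = s' then (1 : ℝ) else 0) - γ * P s a s') * w s a *
            x s a = ρ₀ s') →
      (∑ s, ∑ a, r s a * w s a * x s a)
        - (1 / (2 * μ)) * ∑ s, ∑ a, w s a * (x s a - x' s a) ^ 2
      ≤ (∑ s, ∑ a, r s a * w s a * Zmu P r γ μ Vstar hstar x' s a)
        - (1 / (2 * μ)) * ∑ s, ∑ a,
            w s a * (Zmu P r γ μ Vstar hstar x' s a - x' s a) ^ 2) := by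
  have hflow : ∀ s', bellmanFlow P γ w (Zmu P r γ μ Vstar hstar x') s' = ρ₀ s' :=
    bellmanFlow_Zmu_of_minimizer P r ρ₀ hμ.ne' w x' hstar_nonneg hmin
  have hcompl := sum_mul_Zmu_mul_nonpos_of_minimizer P r ρ₀ hμ.ne' w x' hstar_nonneg hmin
  refine ⟨⟨fun s a => Zmu_nonneg_of_minimizer P r ρ₀ hμ.ne' w x' hstar_nonneg hmin (hw s a),
    hflow⟩, fun x hx hxflow => ?_⟩
  exact proxObjective_le_of_kkt P r γ hμ (fun s a => (hw s a).le) hstar_nonneg x' hcompl hx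
    fun s' => (hxflow s').trans (hflow s').symm

/-- If `(V*, h*)` minimizes the weighted augmented Lagrangian over `V` and
`h ≥ 0`, then `x := Z_μ(V*,h*,x',·)` is an optimal solution of the weighted
proximal dual problem. -/
theorem Z_of_alm_minimizer_solves_prox_dual
    {S A : Type*} [Fintype S] [Fintype A] [DecidableEq S]
    (P : S → A → S → ℝ) (hP : ∀ s a, ∑ s', P s a s' = 1)
    (r : S → A → ℝ)
    (ρ₀ : S → ℝ) (hρ₀ : ∀ s, 0 ≤ ρ₀ s) (hρsum : ∑ s, ρ₀ s = 1)
    (γ : ℝ) (hγ : 0 < γ) (hγ1 : γ < 1)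
    (w : S → A → ℝ) (hw : ∀ s a, 0 < w s a) (hwsum : ∑ s, ∑ a, w s a = 1)
    (μ : ℝ) (hμ : 0 < μ)
    (x' : S → A → ℝ)
    (Vstar : S → ℝ) (hstar : S → A → ℝ)
    (hstar_nonneg : ∀ s a, 0 ≤ hstar s a)
    (hmin : ∀ (V : S → ℝ) (h : S → A → ℝ), (∀ s a, 0 ≤ h s a) →
      Lmu P r ρ₀ γ μ w Vstar hstar x' ≤ Lmu P r ρ₀ γ μ w V h x') :
    -- feasibility of x := Z_μ(V*,h*,x',·)
    ((∀ s a, 0 ≤ Zmu P r γ μ Vstar hstar x' s a) ∧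
      (∀ s' : S, ∑ s, ∑ a,
          ((if s = s' then (1 : ℝ) else 0) - γ * P s a s') * w s a *
            Zmu P r γ μ Vstar hstar x' s a = ρ₀ s'))
    ∧
    -- optimality among all feasible x
    (∀ x : S → A → ℝ, (∀ s a, 0 ≤ x s a) →
      (∀ s' : S, ∑ s, ∑ a,
          ((if s = s' then (1 : ℝ) else 0) - γ * P s a s') * w s a *
            x s a = ρ₀ s') →
      (∑ s, ∑ a, r s a * w s a * x s a)
        - (1 / (2 * μ)) * ∑ s, ∑ a, w s a * (x s a - x' s a) ^ 2
      ≤ (∑ s, ∑ a, r s a * w s a * Zmu P r γ μ Vstar hstar x' s a)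
        - (1 / (2 * μ)) * ∑ s, ∑ a,
            w s a * (Zmu P r γ μ Vstar hstar x' s a - x' s a) ^ 2) :=
  Z_of_alm_minimizer_solves_prox_dual_general P r ρ₀ γ w hw μ hμ x' Vstar hstar hstar_nonneg hmin
end

section
/- Under the hypotheses of the previous statement, the optimal value of the weighted proximal dual problem equals F_μ(V*,h*,x') := L_μ(V*,h*,x') − (1/(2μ)) Σ_{s,a} w(s,a) x'(s,a)², where L_μ is the weighted augmented Lagrangian. -/
/-! With `Z := Zmu P r γ μ V* h* x'`, first-order optimality of `Lmu` at `(V*, h*)` in the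
directions `±e_{s'}` of `V` says that `Z` satisfies the Bellman flow constraints, and in the
directions `e_{(s,a)}` and `±h*` of `h` that `Z ≥ 0` and `∑ w Z h* = 0`. For every `x` satisfying
the flow constraints, the proximal dual objective equals
`F_μ - ∑ w (x h* + (x - Z)² / (2μ))`, so `Z` is dual feasible and attains `F_μ`, which bounds
every other dual value. -/

open Finset Filter Topology

theorem nonneg_of_forall_mem_Ioo_nonneg_mul_add_sq {D C : ℝ}
    (h : ∀ t ∈ Set.Ioo (0 : ℝ) 1, 0 ≤ t * D + t ^ 2 * C) : 0 ≤ D := by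
  have hlim : Tendsto (fun t => D + t * C) (𝓝[>] 0) (𝓝 D) := by
    have : Tendsto (fun t : ℝ => D + t * C) (𝓝 0) (𝓝 (D + 0 * C)) :=
      (continuous_const.add (continuous_id.mul continuous_const)).tendsto 0
    simpa using this.mono_left nhdsWithin_le_nhds
  refine ge_of_tendsto hlim ?_
  filter_upwards [Ioo_mem_nhdsGT one_pos] with t ht
  refine nonneg_of_mul_nonneg_right ?_ ht.1
  linarith [h t ht]

section

variable {S A : Type*} [Fintype S]
  (P : S → A → S → ℝ) (r : S → A → ℝ) (ρ₀ : S → ℝ) (γ μ : ℝ) (w x' : S → A → ℝ)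

def bellmanOp (V : S → ℝ) (h : S → A → ℝ) (s : S) (a : A) : ℝ :=
  h s a + γ * ∑ s', P s a s' * V s' - V s

theorem bellmanOp_add_smul (V dV : S → ℝ) (h dh : S → A → ℝ) (t : ℝ) (s : S) (a : A) :
    bellmanOp P γ (V + t • dV) (h + t • dh) s a
      = bellmanOp P γ V h s a + t * bellmanOp P γ dV dh s a := by
  simp only [bellmanOp, Pi.add_apply, Pi.smul_apply, smul_eq_mul, mul_add, sum_add_distrib,
    mul_left_comm _ t, ← mul_sum]
  ring

theorem Zmu_eq_bellmanOp (V : S → ℝ) (h : S → A → ℝ) (s : S) (a : A) :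
    Zmu P r γ μ V h x' s a = x' s a + μ * (r s a + bellmanOp P γ V h s a) := by
  simp only [Zmu, bellmanOp]
  ring

theorem Zmu_add_smul (V dV : S → ℝ) (h dh : S → A → ℝ) (t : ℝ) (s : S) (a : A) :
    Zmu P r γ μ (V + t • dV) (h + t • dh) x' s a
      = Zmu P r γ μ V h x' s a + μ * t * bellmanOp P γ dV dh s a := by
  simp only [Zmu_eq_bellmanOp, bellmanOp_add_smul]
  ring

variable [Fintype A]

noncomputable def firstVariation (V : S → ℝ) (h : S → A → ℝ) (dV : S → ℝ) (dh : S → A → ℝ) : ℝ :=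
  ∑ s, ρ₀ s * dV s + ∑ s, ∑ a, w s a * Zmu P r γ μ V h x' s a * bellmanOp P γ dV dh s a

theorem Lmu_add_smul (hμ : μ ≠ 0) (V dV : S → ℝ) (h dh : S → A → ℝ) (t : ℝ) :
    Lmu P r ρ₀ γ μ w (V + t • dV) (h + t • dh) x'
      = Lmu P r ρ₀ γ μ w V h x' + t * firstVariation P r ρ₀ γ μ w x' V h dV dh
        + t ^ 2 * (μ / 2 * ∑ s, ∑ a, w s a * bellmanOp P γ dV dh s a ^ 2) := by
  have hlin : ∑ s, ρ₀ s * (V + t • dV) s = ∑ s, ρ₀ s * V s + t * ∑ s, ρ₀ s * dV s := by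
    simp only [Pi.add_apply, Pi.smul_apply, smul_eq_mul, mul_add, sum_add_distrib,
      mul_left_comm _ t, ← mul_sum]
  have hquad : ∑ s, ∑ a, w s a * Zmu P r γ μ (V + t • dV) (h + t • dh) x' s a ^ 2
      = ∑ s, ∑ a, w s a * Zmu P r γ μ V h x' s a ^ 2
        + 2 * μ * t * ∑ s, ∑ a, w s a * Zmu P r γ μ V h x' s a * bellmanOp P γ dV dh s a
        + μ ^ 2 * t ^ 2 * ∑ s, ∑ a, w s a * bellmanOp P γ dV dh s a ^ 2 := by
    simp only [mul_sum, ← sum_add_distrib, Zmu_add_smul]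
    exact sum_congr rfl fun s _ => sum_congr rfl fun a _ => by ring
  rw [Lmu, Lmu, hlin, hquad, firstVariation]
  field_simp
  ring

theorem firstVariation_nonneg_of_isMin (hμ : μ ≠ 0) {V₀ : S → ℝ} {h₀ : S → A → ℝ}
    (hmin : ∀ (V : S → ℝ) (h : S → A → ℝ), (∀ s a, 0 ≤ h s a) →
      Lmu P r ρ₀ γ μ w V₀ h₀ x' ≤ Lmu P r ρ₀ γ μ w V h x')
    (dV : S → ℝ) (dh : S → A → ℝ) (hdh : ∀ t ∈ Set.Ioo (0 : ℝ) 1, ∀ s a, 0 ≤ h₀ s a + t * dh s a) :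
    0 ≤ firstVariation P r ρ₀ γ μ w x' V₀ h₀ dV dh := by
  refine nonneg_of_forall_mem_Ioo_nonneg_mul_add_sq
    (C := μ / 2 * ∑ s, ∑ a, w s a * bellmanOp P γ dV dh s a ^ 2) fun t ht => ?_
  have := hmin (V₀ + t • dV) (h₀ + t • dh) (fun s a => by simpa using hdh t ht s a)
  rw [Lmu_add_smul P r ρ₀ γ μ w x' hμ] at this
  linarith

theorem firstVariation_neg (V : S → ℝ) (h : S → A → ℝ) (dV : S → ℝ) (dh : S → A → ℝ) :
    firstVariation P r ρ₀ γ μ w x' V h (-dV) (-dh)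
      = -firstVariation P r ρ₀ γ μ w x' V h dV dh := by
  have hneg : ∀ s a, bellmanOp P γ (-dV) (-dh) s a = -bellmanOp P γ dV dh s a := by
    intro s a
    simp only [bellmanOp, Pi.neg_apply, mul_neg, sum_neg_distrib]
    ring
  simp only [firstVariation, hneg, Pi.neg_apply, mul_neg, sum_neg_distrib, neg_add]

theorem firstVariation_zero_left (V : S → ℝ) (h dh : S → A → ℝ) :
    firstVariation P r ρ₀ γ μ w x' V h 0 dh
      = ∑ s, ∑ a, w s a * Zmu P r γ μ V h x' s a * dh s a := by
  simp [firstVariation, bellmanOp]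

theorem firstVariation_indicator_zero [DecidableEq S] (V : S → ℝ) (h : S → A → ℝ) (s' : S) :
    firstVariation P r ρ₀ γ μ w x' V h (fun s => if s = s' then 1 else 0) 0
      = ρ₀ s' - ∑ s, ∑ a, ((if s = s' then (1 : ℝ) else 0) - γ * P s a s') * w s a *
          Zmu P r γ μ V h x' s a := by
  simp only [firstVariation, bellmanOp, mul_ite, mul_one, mul_zero, sum_ite_eq', mem_univ, if_true]
  rw [sub_eq_add_neg, ← sum_neg_distrib]
  congr 1
  refine sum_congr rfl fun s _ => ?_
  rw [← sum_neg_distrib]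
  exact sum_congr rfl fun a _ => by simp only [Pi.zero_apply]; ring

theorem Zmu_nonneg_of_isMin (hμ : μ ≠ 0) {s₀ : S} {a₀ : A} (hw : 0 < w s₀ a₀)
    {V₀ : S → ℝ} {h₀ : S → A → ℝ} (h₀_nonneg : ∀ s a, 0 ≤ h₀ s a)
    (hmin : ∀ (V : S → ℝ) (h : S → A → ℝ), (∀ s a, 0 ≤ h s a) →
      Lmu P r ρ₀ γ μ w V₀ h₀ x' ≤ Lmu P r ρ₀ γ μ w V h x') :
    0 ≤ Zmu P r γ μ V₀ h₀ x' s₀ a₀ := by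
  classical
  have hvar := firstVariation_nonneg_of_isMin P r ρ₀ γ μ w x' hμ hmin 0
    (fun s a => if s = s₀ ∧ a = a₀ then 1 else 0)
    (fun t ht s a => add_nonneg (h₀_nonneg s a) (mul_nonneg ht.1.le (by split_ifs <;> norm_num)))
  rw [firstVariation_zero_left] at hvar
  rw [Fintype.sum_eq_single s₀ fun s hs => by simp [hs],
    Fintype.sum_eq_single a₀ fun a ha => by simp [ha]] at hvar
  simp only [and_self, if_true, mul_one] at hvar
  exact nonneg_of_mul_nonneg_right hvar hw

theorem sum_mul_Zmu_mul_eq_zero_of_isMin (hμ : μ ≠ 0) {V₀ : S → ℝ} {h₀ : S → A → ℝ}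
    (h₀_nonneg : ∀ s a, 0 ≤ h₀ s a)
    (hmin : ∀ (V : S → ℝ) (h : S → A → ℝ), (∀ s a, 0 ≤ h s a) →
      Lmu P r ρ₀ γ μ w V₀ h₀ x' ≤ Lmu P r ρ₀ γ μ w V h x') :
    ∑ s, ∑ a, w s a * Zmu P r γ μ V₀ h₀ x' s a * h₀ s a = 0 := by
  have hup := firstVariation_nonneg_of_isMin P r ρ₀ γ μ w x' hμ hmin 0 h₀
    (fun t ht s a => add_nonneg (h₀_nonneg s a) (mul_nonneg ht.1.le (h₀_nonneg s a)))
  -- shrinking `h₀` towards `0` keeps it feasible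
  have hdown := firstVariation_nonneg_of_isMin P r ρ₀ γ μ w x' hμ hmin (-0) (-h₀)
    (fun t ht s a => by simp only [Pi.neg_apply]; nlinarith [h₀_nonneg s a, ht.2])
  rw [firstVariation_neg, firstVariation_zero_left] at hdown
  rw [firstVariation_zero_left] at hup
  linarith

variable [DecidableEq S]

def IsBellmanFlow (x : S → A → ℝ) : Prop :=
  ∀ s' : S, ∑ s, ∑ a, ((if s = s' then (1 : ℝ) else 0) - γ * P s a s') * w s a * x s a = ρ₀ s'

theorem isBellmanFlow_Zmu_of_isMin (hμ : μ ≠ 0) {V₀ : S → ℝ} {h₀ : S → A → ℝ}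
    (h₀_nonneg : ∀ s a, 0 ≤ h₀ s a)
    (hmin : ∀ (V : S → ℝ) (h : S → A → ℝ), (∀ s a, 0 ≤ h s a) →
      Lmu P r ρ₀ γ μ w V₀ h₀ x' ≤ Lmu P r ρ₀ γ μ w V h x') :
    IsBellmanFlow P ρ₀ γ w (Zmu P r γ μ V₀ h₀ x') := by
  intro s'
  have hdh : ∀ t ∈ Set.Ioo (0 : ℝ) 1, ∀ s a, 0 ≤ h₀ s a + t * (-0 : S → A → ℝ) s a :=
    fun t _ s a => by simp [h₀_nonneg s a]
  have hup := firstVariation_nonneg_of_isMin P r ρ₀ γ μ w x' hμ hmin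
    (fun s => if s = s' then 1 else 0) 0 (by simpa using hdh)
  have hdown := firstVariation_nonneg_of_isMin P r ρ₀ γ μ w x' hμ hmin
    (-fun s => if s = s' then 1 else 0) (-0) hdh
  rw [firstVariation_neg, firstVariation_indicator_zero] at hdown
  rw [firstVariation_indicator_zero] at hup
  linarith

theorem IsBellmanFlow.sum_mul_eq {x : S → A → ℝ} (hx : IsBellmanFlow P ρ₀ γ w x) (V : S → ℝ) :
    ∑ s, ρ₀ s * V s = -∑ s, ∑ a, w s a * x s a * bellmanOp P γ V 0 s a := by
  calc ∑ s', ρ₀ s' * V s'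
      = ∑ s', (∑ s, ∑ a, ((if s = s' then (1 : ℝ) else 0) - γ * P s a s') * w s a * x s a)
          * V s' := sum_congr rfl fun s' _ => by rw [hx s']
    _ = ∑ s, ∑ a, w s a * x s a * ∑ s', ((if s = s' then (1 : ℝ) else 0) - γ * P s a s') * V s' := by
        simp only [sum_mul, mul_sum]
        rw [sum_comm]
        refine sum_congr rfl fun s _ => ?_
        rw [sum_comm]
        exact sum_congr rfl fun a _ => sum_congr rfl fun s' _ => by ring
    _ = -∑ s, ∑ a, w s a * x s a * bellmanOp P γ V 0 s a := by
        rw [← sum_neg_distrib]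
        refine sum_congr rfl fun s _ => ?_
        rw [← sum_neg_distrib]
        refine sum_congr rfl fun a _ => ?_
        simp only [sub_mul, sum_sub_distrib, ite_mul, one_mul, zero_mul, sum_ite_eq, mem_univ,
          if_true, mul_assoc, ← mul_sum, bellmanOp, Pi.zero_apply]
        ring

noncomputable def proxDualObjective (x : S → A → ℝ) : ℝ :=
  (∑ s, ∑ a, r s a * w s a * x s a) - (1 / (2 * μ)) * ∑ s, ∑ a, w s a * (x s a - x' s a) ^ 2

theorem proxDualObjective_eq_of_isBellmanFlow (hμ : μ ≠ 0) (V : S → ℝ) (h : S → A → ℝ)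
    {x : S → A → ℝ} (hx : IsBellmanFlow P ρ₀ γ w x) :
    proxDualObjective r μ w x' x
      = Lmu P r ρ₀ γ μ w V h x' - 1 / (2 * μ) * ∑ s, ∑ a, w s a * x' s a ^ 2
        - ∑ s, ∑ a, w s a * (x s a * h s a
            + 1 / (2 * μ) * (x s a - Zmu P r γ μ V h x' s a) ^ 2) := by
  rw [proxDualObjective, Lmu, hx.sum_mul_eq P ρ₀ γ w V]
  simp only [mul_sum, ← sum_neg_distrib, ← sum_sub_distrib, ← sum_add_distrib]
  refine sum_congr rfl fun s _ => sum_congr rfl fun a _ => ?_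
  rw [Zmu_eq_bellmanOp]
  simp only [bellmanOp, Pi.zero_apply]
  field_simp
  ring

end

theorem prox_dual_optimal_value_eq_Fmu_general
    {S A : Type*} [Fintype S] [Fintype A] [DecidableEq S]
    (P : S → A → S → ℝ)
    (r : S → A → ℝ)
    (ρ₀ : S → ℝ)
    (γ : ℝ)
    (w : S → A → ℝ) (hw : ∀ s a, 0 < w s a)
    (μ : ℝ) (hμ : 0 < μ)
    (x' : S → A → ℝ)
    (Vstar : S → ℝ) (hstar : S → A → ℝ)
    (hstar_nonneg : ∀ s a, 0 ≤ hstar s a)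
    (hmin : ∀ (V : S → ℝ) (h : S → A → ℝ), (∀ s a, 0 ≤ h s a) →
      Lmu P r ρ₀ γ μ w Vstar hstar x' ≤ Lmu P r ρ₀ γ μ w V h x') :
    sSup {c : ℝ | ∃ x : S → A → ℝ,
        (∀ s a, 0 ≤ x s a) ∧
        (∀ s' : S, ∑ s, ∑ a,
          ((if s = s' then (1 : ℝ) else 0) - γ * P s a s') * w s a *
            x s a = ρ₀ s') ∧
        c = (∑ s, ∑ a, r s a * w s a * x s a)
          - (1 / (2 * μ)) * ∑ s, ∑ a, w s a * (x s a - x' s a) ^ 2}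
      =
    Lmu P r ρ₀ γ μ w Vstar hstar x'
      - (1 / (2 * μ)) * ∑ s, ∑ a, w s a * (x' s a) ^ 2 := by
  set Z := Zmu P r γ μ Vstar hstar x' with hZ
  have hZ_flow : IsBellmanFlow P ρ₀ γ w Z :=
    isBellmanFlow_Zmu_of_isMin P r ρ₀ γ μ w x' hμ.ne' hstar_nonneg hmin
  have hZ_nonneg : ∀ s a, 0 ≤ Z s a := fun s a =>
    Zmu_nonneg_of_isMin P r ρ₀ γ μ w x' hμ.ne' (hw s a) hstar_nonneg hmin
  have hslack : ∑ s, ∑ a, w s a * Z s a * hstar s a = 0 :=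
    sum_mul_Zmu_mul_eq_zero_of_isMin P r ρ₀ γ μ w x' hμ.ne' hstar_nonneg hmin
  refine IsGreatest.csSup_eq ⟨⟨Z, hZ_nonneg, hZ_flow, ?_⟩, ?_⟩
  · change _ = proxDualObjective r μ w x' Z
    rw [proxDualObjective_eq_of_isBellmanFlow P r ρ₀ γ μ w x' hμ.ne' Vstar hstar hZ_flow]
    simp only [← hZ, sub_self, ne_eq, OfNat.ofNat_ne_zero, not_false_eq_true, zero_pow,
      mul_zero, add_zero, ← mul_assoc, hslack, sub_zero]
  · rintro c ⟨x, hx_nonneg, hx_flow, rfl⟩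
    change proxDualObjective r μ w x' x ≤ _
    rw [proxDualObjective_eq_of_isBellmanFlow P r ρ₀ γ μ w x' hμ.ne' Vstar hstar hx_flow, ← hZ]
    have hgap : 0 ≤ ∑ s, ∑ a, w s a * (x s a * hstar s a + 1 / (2 * μ) * (x s a - Z s a) ^ 2) :=
      sum_nonneg fun s _ => sum_nonneg fun a _ => mul_nonneg (hw s a).le <|
        add_nonneg (mul_nonneg (hx_nonneg s a) (hstar_nonneg s a)) (by positivity)
    linarith

/-- The optimal value of the weighted proximal dual problem equals
`F_μ(V*,h*,x') = L_μ(V*,h*,x') - (1/(2μ)) Σ w x'²`. -/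
theorem prox_dual_optimal_value_eq_Fmu
    {S A : Type*} [Fintype S] [Fintype A] [DecidableEq S]
    (P : S → A → S → ℝ) (hP : ∀ s a, ∑ s', P s a s' = 1)
    (r : S → A → ℝ)
    (ρ₀ : S → ℝ) (hρ₀ : ∀ s, 0 ≤ ρ₀ s) (hρsum : ∑ s, ρ₀ s = 1)
    (γ : ℝ) (hγ : 0 < γ) (hγ1 : γ < 1)
    (w : S → A → ℝ) (hw : ∀ s a, 0 < w s a) (hwsum : ∑ s, ∑ a, w s a = 1)
    (μ : ℝ) (hμ : 0 < μ)
    (x' : S → A → ℝ)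
    (Vstar : S → ℝ) (hstar : S → A → ℝ)
    (hstar_nonneg : ∀ s a, 0 ≤ hstar s a)
    (hmin : ∀ (V : S → ℝ) (h : S → A → ℝ), (∀ s a, 0 ≤ h s a) →
      Lmu P r ρ₀ γ μ w Vstar hstar x' ≤ Lmu P r ρ₀ γ μ w V h x') :
    sSup {c : ℝ | ∃ x : S → A → ℝ,
        (∀ s a, 0 ≤ x s a) ∧
        (∀ s' : S, ∑ s, ∑ a,
          ((if s = s' then (1 : ℝ) else 0) - γ * P s a s') * w s a *
            x s a = ρ₀ s') ∧
        c = (∑ s, ∑ a, r s a * w s a * x s a)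
          - (1 / (2 * μ)) * ∑ s, ∑ a, w s a * (x s a - x' s a) ^ 2}
      =
    Lmu P r ρ₀ γ μ w Vstar hstar x'
      - (1 / (2 * μ)) * ∑ s, ∑ a, w s a * (x' s a) ^ 2 :=
  prox_dual_optimal_value_eq_Fmu_general P r ρ₀ γ w hw μ hμ x' Vstar hstar hstar_nonneg hmin
end

section
/- Residual accumulation bound: let T : H → H be firmly nonexpansive on a Hilbert space H with fixed point x*, suppose iterates x_k ∈ H satisfy ‖x_{k+1} − T x_k‖ ≤ δ for all k and ‖x_k − x*‖ ≤ C, ‖T x_k − x*‖ ≤ C for all k. Then (1/K) Σ_{k=1}^K ‖x_k − T x_k‖² ≤ ‖x₁ − x*‖²/K + 4 C δ. -/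
open RealInnerProductSpace


/-- Residual accumulation bound for approximate iterates of a firmly
nonexpansive map `T` with fixed point `x*`:
`(1/K) Σ_{k=1}^K ‖x_k - T x_k‖² ≤ ‖x₁ - x*‖²/K + 4Cδ`. -/
theorem residual_accumulation_bound
    {H : Type*} [NormedAddCommGroup H] [InnerProductSpace ℝ H]
    (T : H → H) (xstar : H) (hfix : T xstar = xstar)
    (hfirm : ∀ x : H, ‖xstar - T x‖ ^ 2 + ‖x - T x‖ ^ 2 ≤ ‖x - xstar‖ ^ 2)
    (x : ℕ → H) (δ C : ℝ) (hδ : 0 ≤ δ) (hC : 0 ≤ C)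
    (hiter : ∀ k, ‖x (k + 1) - T (x k)‖ ≤ δ)
    (hbound : ∀ k, ‖x k - xstar‖ ≤ C)
    (hboundT : ∀ k, ‖T (x k) - xstar‖ ≤ C)
    (K : ℕ) (hK : 0 < K) :
    (1 / (K : ℝ)) * ∑ k ∈ Finset.Icc 1 K, ‖x k - T (x k)‖ ^ 2
      ≤ ‖x 1 - xstar‖ ^ 2 / (K : ℝ) + 4 * C * δ := by
  have hKpos : (0 : ℝ) < K := by exact_mod_cast hK
  -- per-step bound
  have hstep : ∀ k, ‖x k - T (x k)‖ ^ 2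
      ≤ ‖x k - xstar‖ ^ 2 - ‖x (k + 1) - xstar‖ ^ 2 + 4 * C * δ := by
    intro k
    set a := x (k + 1) - xstar
    set b := T (x k) - xstar
    have hab : a - b = x (k + 1) - T (x k) := by simp [a, b]
    have hinner : ‖a‖ ^ 2 - ‖b‖ ^ 2 = ⟪a - b, a + b⟫ := by
      rw [inner_sub_left, inner_add_right, inner_add_right,
        real_inner_self_eq_norm_sq, real_inner_self_eq_norm_sq,
        real_inner_comm b a]
      ring
    have h1 : ⟪a - b, a + b⟫ ≤ ‖a - b‖ * ‖a + b‖ := real_inner_le_norm _ _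
    have h2 : ‖a - b‖ ≤ δ := by rw [hab]; exact hiter k
    have h3 : ‖a + b‖ ≤ 2 * C := by
      calc ‖a + b‖ ≤ ‖a‖ + ‖b‖ := norm_add_le _ _
        _ ≤ C + C := add_le_add (hbound (k + 1)) (hboundT k)
        _ = 2 * C := by ring
    have h4 : ‖a - b‖ * ‖a + b‖ ≤ δ * (2 * C) :=
      mul_le_mul h2 h3 (norm_nonneg _) hδ
    have hcross : ‖a‖ ^ 2 - ‖b‖ ^ 2 ≤ 4 * C * δ := by
      nlinarith [hinner, h1, h4]
    have hf := hfirm (x k)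
    have hrev : ‖xstar - T (x k)‖ = ‖b‖ := by rw [norm_sub_rev]
    rw [hrev] at hf
    nlinarith [hf, hcross]
  have hsum : ∑ k ∈ Finset.Icc 1 K, ‖x k - T (x k)‖ ^ 2
      ≤ ∑ k ∈ Finset.Icc 1 K,
        (‖x k - xstar‖ ^ 2 - ‖x (k + 1) - xstar‖ ^ 2 + 4 * C * δ) :=
    Finset.sum_le_sum fun k _ => hstep k
  have htel : ∑ k ∈ Finset.Icc 1 K,
      (‖x k - xstar‖ ^ 2 - ‖x (k + 1) - xstar‖ ^ 2)
      = ‖x 1 - xstar‖ ^ 2 - ‖x (K + 1) - xstar‖ ^ 2 := by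
    rw [← Finset.Ico_add_one_right_eq_Icc, Finset.sum_Ico_eq_sum_range]
    have := Finset.sum_range_sub' (fun i => ‖x (1 + i) - xstar‖ ^ 2) K
    simpa [Nat.add_sub_cancel, add_comm, add_left_comm, add_assoc] using this
  have hsum2 : ∑ k ∈ Finset.Icc 1 K, ‖x k - T (x k)‖ ^ 2
      ≤ ‖x 1 - xstar‖ ^ 2 + K * (4 * C * δ) := by
    have hcard : (Finset.Icc 1 K).card = K := by
      rw [Nat.card_Icc]; omega
    calc ∑ k ∈ Finset.Icc 1 K, ‖x k - T (x k)‖ ^ 2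
        ≤ ∑ k ∈ Finset.Icc 1 K,
          (‖x k - xstar‖ ^ 2 - ‖x (k + 1) - xstar‖ ^ 2 + 4 * C * δ) := hsum
      _ = (‖x 1 - xstar‖ ^ 2 - ‖x (K + 1) - xstar‖ ^ 2) + K * (4 * C * δ) := by
          rw [Finset.sum_add_distrib, htel, Finset.sum_const, hcard]
          push_cast; ring
      _ ≤ ‖x 1 - xstar‖ ^ 2 + K * (4 * C * δ) := by
          nlinarith [sq_nonneg ‖x (K + 1) - xstar‖]
  rw [one_div]
  calc (K : ℝ)⁻¹ * ∑ k ∈ Finset.Icc 1 K, ‖x k - T (x k)‖ ^ 2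
      ≤ (K : ℝ)⁻¹ * (‖x 1 - xstar‖ ^ 2 + K * (4 * C * δ)) := by
        apply mul_le_mul_of_nonneg_left hsum2 (by positivity)
    _ = ‖x 1 - xstar‖ ^ 2 / K + 4 * C * δ := by
        field_simp
end
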